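/- arXiv:2310.17761 — 2 statements merged into one kernel-verified Lean document; each statement's English description precedes it below -/
import Mathlib

section
/- Optimality gap from a prox-gradient step: let Φ(α, v) be L-smooth and μ-strongly convex in v on a closed convex set W ⊆ ℝ^d, with each component gradient bounded so that α ↦ ∇_v Φ(α, v) is √N·G-Lipschitz. Given an approximate model ṽ and approximate mixing weights α̂, define v̂ = P_W(ṽ − (1/L)∇_v Φ(α̂, ṽ)). Then Φ(α*, v̂) − Φ(α*, v*(α*)) ≤ 2L‖ṽ − v*(α̂)‖² + (2κ_Φ² L + 4NG²/L)‖α̂ − α*‖², where v*(α) = argmin_{v∈W} Φ(α, v) and κ_Φ = √N·G/μ. -/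
open RealInnerProductSpace

set_option maxHeartbeats 1600000 in
/-- Optimality gap from a prox-gradient step: with `v̂ = P_W(ṽ − (1/L)∇_v Φ(α̂, ṽ))`,
`Φ(α*, v̂) − Φ(α*, v*(α*)) ≤ 2L‖ṽ − v*(α̂)‖² + (2κ_Φ²L + 4NG²/L)‖α̂ − α*‖²`,
where `κ_Φ = √N G/μ`. -/
theorem optimality_gap_prox_step {d N : ℕ}
    (W : Set (EuclideanSpace ℝ (Fin d))) (hWconv : Convex ℝ W) (hWclosed : IsClosed W)
    (L μ G : ℝ) (hL : 0 < L) (hμ : 0 < μ) (hG : 0 ≤ G)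
    (Φ : EuclideanSpace ℝ (Fin N) → EuclideanSpace ℝ (Fin d) → ℝ)
    (gΦ : EuclideanSpace ℝ (Fin N) → EuclideanSpace ℝ (Fin d) → EuclideanSpace ℝ (Fin d))
    (hgrad : ∀ α v, HasGradientAt (Φ α) (gΦ α v) v)
    (hsmooth : ∀ α v v', ‖gΦ α v - gΦ α v'‖ ≤ L * ‖v - v'‖)
    (hsc : ∀ α x y, Φ α y ≥ Φ α x + ⟪gΦ α x, y - x⟫ + μ / 2 * ‖y - x‖ ^ 2)
    (hlipα : ∀ α α' v, ‖gΦ α v - gΦ α' v‖ ≤ Real.sqrt N * G * ‖α - α'‖)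
    (vstar : EuclideanSpace ℝ (Fin N) → EuclideanSpace ℝ (Fin d))
    (hmem : ∀ α, vstar α ∈ W)
    (hmin : ∀ α, ∀ v ∈ W, Φ α (vstar α) ≤ Φ α v)
    (hopt : ∀ α, ∀ v ∈ W, (0 : ℝ) ≤ ⟪v - vstar α, gΦ α (vstar α)⟫)
    (αhat αstar : EuclideanSpace ℝ (Fin N))
    (hαhat : (∀ j, 0 ≤ αhat j) ∧ (∑ j, αhat j) = 1)
    (hαstar : (∀ j, 0 ≤ αstar j) ∧ (∑ j, αstar j) = 1)
    (vt vhat : EuclideanSpace ℝ (Fin d))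
    (hvhatW : vhat ∈ W)
    -- `vhat` is the Euclidean projection of `ṽ − (1/L)∇_v Φ(α̂, ṽ)` onto `W`,
    -- characterized by the variational inequality:
    (hproj : ∀ v ∈ W, (0 : ℝ) ≤ ⟪v - vhat, L • (vhat - vt) + gΦ αhat vt⟫) :
    Φ αstar vhat - Φ αstar (vstar αstar)
      ≤ 2 * L * ‖vt - vstar αhat‖ ^ 2
        + (2 * (Real.sqrt N * G / μ) ^ 2 * L + 4 * N * G ^ 2 / L) * ‖αhat - αstar‖ ^ 2 := by
  have hn : (0:ℝ) ≤ (N:ℝ) := Nat.cast_nonneg N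
  have hS0 : (0:ℝ) ≤ Real.sqrt N * G := mul_nonneg (Real.sqrt_nonneg _) hG
  have hSsq : (Real.sqrt N * G)^2 = (N:ℝ) * G^2 := by
    rw [mul_pow, Real.sq_sqrt hn]
  -- Lipschitzness of vstar
  have hmono : μ * ‖vstar αhat - vstar αstar‖^2
      ≤ ⟪gΦ αhat (vstar αhat) - gΦ αhat (vstar αstar), vstar αhat - vstar αstar⟫ := by
    have h1 := hsc αhat (vstar αhat) (vstar αstar)
    have h2 := hsc αhat (vstar αstar) (vstar αhat)
    have hn1 : ‖vstar αstar - vstar αhat‖ = ‖vstar αhat - vstar αstar‖ := norm_sub_rev _ _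
    rw [hn1] at h1
    have e1 : ⟪gΦ αhat (vstar αhat), vstar αstar - vstar αhat⟫
        = - ⟪gΦ αhat (vstar αhat), vstar αhat - vstar αstar⟫ := by
      rw [← inner_neg_right, neg_sub]
    have e2 : ⟪gΦ αhat (vstar αhat) - gΦ αhat (vstar αstar), vstar αhat - vstar αstar⟫
        = ⟪gΦ αhat (vstar αhat), vstar αhat - vstar αstar⟫
          - ⟪gΦ αhat (vstar αstar), vstar αhat - vstar αstar⟫ := inner_sub_left _ _ _
    linarith
  have hA : ⟪gΦ αhat (vstar αhat), vstar αhat - vstar αstar⟫ ≤ 0 := by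
    have h := hopt αhat (vstar αstar) (hmem αstar)
    have e1 : ⟪gΦ αhat (vstar αhat), vstar αhat - vstar αstar⟫
        = - ⟪vstar αstar - vstar αhat, gΦ αhat (vstar αhat)⟫ := by
      rw [real_inner_comm, ← neg_sub (vstar αstar) (vstar αhat), inner_neg_left]
    linarith
  have hB : ⟪gΦ αstar (vstar αstar), vstar αstar - vstar αhat⟫ ≤ 0 := by
    have h := hopt αstar (vstar αhat) (hmem αhat)
    have e1 : ⟪gΦ αstar (vstar αstar), vstar αstar - vstar αhat⟫
        = - ⟪vstar αhat - vstar αstar, gΦ αstar (vstar αstar)⟫ := by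
      rw [real_inner_comm, ← neg_sub (vstar αhat) (vstar αstar), inner_neg_left]
    linarith
  have hC : ⟪gΦ αhat (vstar αstar) - gΦ αstar (vstar αstar), vstar αstar - vstar αhat⟫
      ≤ Real.sqrt N * G * ‖αhat - αstar‖ * ‖vstar αhat - vstar αstar‖ := by
    calc ⟪gΦ αhat (vstar αstar) - gΦ αstar (vstar αstar), vstar αstar - vstar αhat⟫
        ≤ ‖gΦ αhat (vstar αstar) - gΦ αstar (vstar αstar)‖ * ‖vstar αstar - vstar αhat‖ :=
          real_inner_le_norm _ _
      _ ≤ Real.sqrt N * G * ‖αhat - αstar‖ * ‖vstar αhat - vstar αstar‖ := by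
          rw [norm_sub_rev (vstar αstar) (vstar αhat)]
          exact mul_le_mul_of_nonneg_right (hlipα αhat αstar (vstar αstar)) (norm_nonneg _)
  have hsplit : ⟪gΦ αhat (vstar αhat) - gΦ αhat (vstar αstar), vstar αhat - vstar αstar⟫
      = ⟪gΦ αhat (vstar αhat), vstar αhat - vstar αstar⟫
        + ⟪gΦ αhat (vstar αstar) - gΦ αstar (vstar αstar), vstar αstar - vstar αhat⟫
        + ⟪gΦ αstar (vstar αstar), vstar αstar - vstar αhat⟫ := by
    simp only [inner_sub_left, inner_sub_right]
    ring
  have hLip : ‖vstar αhat - vstar αstar‖ ≤ Real.sqrt N * G / μ * ‖αhat - αstar‖ := by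
    rcases eq_or_lt_of_le (norm_nonneg (vstar αhat - vstar αstar)) with h0 | h0
    · rw [← h0]
      positivity
    · have hx : μ * ‖vstar αhat - vstar αstar‖^2
          ≤ Real.sqrt N * G * ‖αhat - αstar‖ * ‖vstar αhat - vstar αstar‖ := by linarith
      rw [div_mul_eq_mul_div, le_div_iff₀ hμ]
      nlinarith
  -- main chain
  have hkey : Φ αstar vhat - Φ αstar (vstar αstar)
      ≤ ⟪gΦ αstar vhat, vhat - vstar αstar⟫ - μ/2 * ‖vhat - vstar αstar‖^2 := by
    have h := hsc αstar vhat (vstar αstar)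
    have e1 : ⟪gΦ αstar vhat, vstar αstar - vhat⟫
        = - ⟪gΦ αstar vhat, vhat - vstar αstar⟫ := by
      rw [← inner_neg_right, neg_sub]
    have e2 : ‖vstar αstar - vhat‖ = ‖vhat - vstar αstar‖ := norm_sub_rev _ _
    rw [e2] at h
    linarith
  have hb1 : ⟪gΦ αstar vhat - gΦ αhat vhat, vhat - vstar αstar⟫
      ≤ Real.sqrt N * G * ‖αhat - αstar‖ * ‖vhat - vstar αstar‖ := by
    calc ⟪gΦ αstar vhat - gΦ αhat vhat, vhat - vstar αstar⟫
        ≤ ‖gΦ αstar vhat - gΦ αhat vhat‖ * ‖vhat - vstar αstar‖ := real_inner_le_norm _ _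
      _ ≤ Real.sqrt N * G * ‖αhat - αstar‖ * ‖vhat - vstar αstar‖ := by
          have h := hlipα αstar αhat vhat
          rw [norm_sub_rev αstar αhat] at h
          exact mul_le_mul_of_nonneg_right h (norm_nonneg _)
  have hb2 : ⟪gΦ αhat vhat - gΦ αhat vt, vhat - vstar αstar⟫
      ≤ L * ‖vhat - vt‖ * ‖vhat - vstar αstar‖ := by
    calc ⟪gΦ αhat vhat - gΦ αhat vt, vhat - vstar αstar⟫
        ≤ ‖gΦ αhat vhat - gΦ αhat vt‖ * ‖vhat - vstar αstar‖ := real_inner_le_norm _ _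
      _ ≤ L * ‖vhat - vt‖ * ‖vhat - vstar αstar‖ :=
          mul_le_mul_of_nonneg_right (hsmooth αhat vhat vt) (norm_nonneg _)
  have hb3 : ⟪L • (vhat - vt) + gΦ αhat vt, vhat - vstar αstar⟫ ≤ 0 := by
    have h := hproj (vstar αstar) (hmem αstar)
    have e1 : ⟪L • (vhat - vt) + gΦ αhat vt, vhat - vstar αstar⟫
        = - ⟪vstar αstar - vhat, L • (vhat - vt) + gΦ αhat vt⟫ := by
      rw [real_inner_comm, ← neg_sub (vstar αstar) vhat, inner_neg_left]
    linarith
  have hid : ‖vt - vstar αstar‖^2 = ‖vhat - vt‖^2 + ‖vhat - vstar αstar‖^2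
      + 2 * ⟪vt - vhat, vhat - vstar αstar⟫ := by
    have hseq : vt - vstar αstar = (vt - vhat) + (vhat - vstar αstar) :=
      (sub_add_sub_cancel _ _ _).symm
    rw [hseq, norm_add_sq_real, norm_sub_rev vt vhat]
    ring
  have hb4 : L * ⟪vt - vhat, vhat - vstar αstar⟫
      = L/2 * (‖vt - vstar αstar‖^2 - ‖vhat - vt‖^2 - ‖vhat - vstar αstar‖^2) := by
    rw [show ⟪vt - vhat, vhat - vstar αstar⟫
        = (‖vt - vstar αstar‖^2 - ‖vhat - vt‖^2 - ‖vhat - vstar αstar‖^2)/2 by linarith]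
    ring
  have hdecomp : ⟪gΦ αstar vhat, vhat - vstar αstar⟫
      = ⟪gΦ αstar vhat - gΦ αhat vhat, vhat - vstar αstar⟫
        + ⟪gΦ αhat vhat - gΦ αhat vt, vhat - vstar αstar⟫
        + ⟪L • (vhat - vt) + gΦ αhat vt, vhat - vstar αstar⟫
        + L * ⟪vt - vhat, vhat - vstar αstar⟫ := by
    simp only [inner_sub_left, inner_add_left, real_inner_smul_left, inner_sub_right]
    ring
  have hyoung : L * ‖vhat - vt‖ * ‖vhat - vstar αstar‖
      ≤ L/2 * ‖vhat - vt‖^2 + L/2 * ‖vhat - vstar αstar‖^2 := by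
    nlinarith [sq_nonneg (‖vhat - vt‖ - ‖vhat - vstar αstar‖), hL.le]
  have hstep : Φ αstar vhat - Φ αstar (vstar αstar)
      ≤ Real.sqrt N * G * ‖αhat - αstar‖ * ‖vhat - vstar αstar‖
        - μ/2 * ‖vhat - vstar αstar‖^2 + L/2 * ‖vt - vstar αstar‖^2 := by
    linarith
  have hq : Real.sqrt N * G * ‖αhat - αstar‖ * ‖vhat - vstar αstar‖
      - μ/2 * ‖vhat - vstar αstar‖^2
      ≤ (Real.sqrt N * G)^2 / (2*μ) * ‖αhat - αstar‖^2 := by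
    rw [← sub_nonneg]
    have hid3 : (Real.sqrt N * G)^2/(2*μ) * ‖αhat - αstar‖^2
        - (Real.sqrt N * G * ‖αhat - αstar‖ * ‖vhat - vstar αstar‖
          - μ/2 * ‖vhat - vstar αstar‖^2)
        = (Real.sqrt N * G * ‖αhat - αstar‖ - μ * ‖vhat - vstar αstar‖)^2/(2*μ) := by
      field_simp
      ring
    rw [hid3]
    exact div_nonneg (sq_nonneg _) (by linarith)
  have hr : ‖vt - vstar αstar‖ ≤ ‖vt - vstar αhat‖ + Real.sqrt N * G / μ * ‖αhat - αstar‖ := by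
    calc ‖vt - vstar αstar‖ = ‖(vt - vstar αhat) + (vstar αhat - vstar αstar)‖ := by
          rw [sub_add_sub_cancel]
      _ ≤ ‖vt - vstar αhat‖ + ‖vstar αhat - vstar αstar‖ := norm_add_le _ _
      _ ≤ _ := by linarith
  have hr2 : L/2 * ‖vt - vstar αstar‖^2
      ≤ L * ‖vt - vstar αhat‖^2 + L * (Real.sqrt N * G / μ)^2 * ‖αhat - αstar‖^2 := by
    have h1 : ‖vt - vstar αstar‖^2
        ≤ (‖vt - vstar αhat‖ + Real.sqrt N * G / μ * ‖αhat - αstar‖)^2 :=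
      pow_le_pow_left₀ (norm_nonneg _) hr 2
    have h2 := mul_le_mul_of_nonneg_left h1 (le_of_lt (half_pos hL))
    have h3 : L/2 * (‖vt - vstar αhat‖ + Real.sqrt N * G / μ * ‖αhat - αstar‖)^2
        ≤ L * ‖vt - vstar αhat‖^2 + L * (Real.sqrt N * G / μ)^2 * ‖αhat - αstar‖^2 := by
      rw [← sub_nonneg]
      have hid4 : L * ‖vt - vstar αhat‖^2 + L * (Real.sqrt N * G / μ)^2 * ‖αhat - αstar‖^2
          - L/2 * (‖vt - vstar αhat‖ + Real.sqrt N * G / μ * ‖αhat - αstar‖)^2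
          = L/2 * (‖vt - vstar αhat‖ - Real.sqrt N * G / μ * ‖αhat - αstar‖)^2 := by
        ring
      rw [hid4]
      exact mul_nonneg (by linarith) (sq_nonneg _)
    linarith
  have hgap : Φ αstar vhat - Φ αstar (vstar αstar)
      ≤ (Real.sqrt N * G)^2/(2*μ) * ‖αhat - αstar‖^2 + L * ‖vt - vstar αhat‖^2
        + L * (Real.sqrt N * G / μ)^2 * ‖αhat - αstar‖^2 := by
    linarith
  have hfin : (Real.sqrt N * G)^2/(2*μ) + L * (Real.sqrt N * G / μ)^2
      ≤ 2 * (Real.sqrt N * G / μ)^2 * L + 4 * (Real.sqrt N * G)^2 / L := by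
    rw [← sub_nonneg]
    have hid2 : 2 * (Real.sqrt N * G / μ)^2 * L + 4 * (Real.sqrt N * G)^2 / L
        - ((Real.sqrt N * G)^2/(2*μ) + L * (Real.sqrt N * G / μ)^2)
        = (Real.sqrt N * G)^2 * (2*(L - 2*μ)^2 + 7*μ*L) / (2*μ^2*L) := by
      field_simp
      ring
    rw [hid2]
    apply div_nonneg
    · apply mul_nonneg (sq_nonneg _)
      nlinarith [sq_nonneg (L - 2*μ), mul_pos hμ hL]
    · nlinarith [mul_pos (pow_pos hμ 2) hL]
  have hcmp := mul_le_mul_of_nonneg_right hfin (sq_nonneg ‖αhat - αstar‖)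
  have hbridge : 4 * (Real.sqrt N * G)^2 / L * ‖αhat - αstar‖^2
      = 4 * (N:ℝ) * G^2 / L * ‖αhat - αstar‖^2 := by
    rw [hSsq]
    ring
  nlinarith [hgap, hcmp, hbridge, mul_nonneg hL.le (sq_nonneg ‖vt - vstar αhat‖)]
end

section
/- Noise accumulation bound in shuffling SGD: let δ_j = Σ_{τ=0}^{K−1} ∏_{t'} (I − a_j η H_{t'}) · η a_j δ^τ_{σ(j)} with each ‖δ^τ_{σ(j)}‖ ≤ δ, a_j = α̂(σ(j))·N where α̂ ∈ Δ_N, and suppose ‖I − Q_{j'}H_{j'}‖ ≤ 1 + η a_{j'} K(1+ηNL)^K · L and ηNL ≤ 1/K and η N K (1+ηNL)^K L ≤ 1/N (so the accumulated product over N factors is at most e). Then ‖Σ_{j=1}^N ∏_{j'=N}^{j+1}(I − Q_{j'}H_{j'}) δ_j‖ ≤ η N K e² δ. -/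
lemma list_prod_norm_le {d : ℕ} (b : ℝ) (hb : 1 ≤ b)
    (l : List (EuclideanSpace ℝ (Fin d) →L[ℝ] EuclideanSpace ℝ (Fin d)))
    (h : ∀ x ∈ l, ‖x‖ ≤ b) : ‖l.prod‖ ≤ b ^ l.length := by
  induction l with
  | nil =>
    simp only [List.prod_nil, List.length_nil, pow_zero, ContinuousLinearMap.one_def]
    exact ContinuousLinearMap.norm_id_le
  | cons x xs ih =>
    simp only [List.prod_cons, List.length_cons, pow_succ]
    have h1 : ‖x‖ ≤ b := h x (by simp)
    have h2 : ‖xs.prod‖ ≤ b ^ xs.length := ih (fun y hy => h y (by simp [hy]))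
    calc ‖x * xs.prod‖ ≤ ‖x‖ * ‖xs.prod‖ := norm_mul_le _ _
      _ ≤ b * b ^ xs.length := by
          apply mul_le_mul h1 h2 (norm_nonneg _) (by linarith)
      _ = b ^ xs.length * b := mul_comm _ _



/-- Noise accumulation bound in shuffling SGD: with
`δ_j = ∑_{τ=0}^{K−1} ∏_{t'}(I − a_j η Hin_{t'}) η a_j δ^τ_{σ(j)}`, `a_j = α̂(σ(j))·N`
(simplex weights `w`), `‖δ^τ‖ ≤ δ`, and the stated step-size and norm conditions,
`‖∑_{j=1}^N ∏_{j'=N}^{j+1}(I − Q_{j'}H_{j'}) δ_j‖ ≤ η N K e² δ`. -/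
theorem shuffling_noise_bound {d : ℕ} (N K : ℕ) (hN : 2 ≤ N) (hK : 0 < K)
    (η L δ : ℝ) (hη : 0 < η) (hL : 0 ≤ L) (hδ : 0 ≤ δ)
    (w : ℕ → ℝ) (hw0 : ∀ j, 0 ≤ w j) (hw1 : (∑ j ∈ Finset.Icc 1 N, w j) = 1)
    (a : ℕ → ℝ) (ha : ∀ j, a j = N * w j)
    (Q H : ℕ → (EuclideanSpace ℝ (Fin d) →L[ℝ] EuclideanSpace ℝ (Fin d)))
    (Hin : ℕ → ℕ → (EuclideanSpace ℝ (Fin d) →L[ℝ] EuclideanSpace ℝ (Fin d)))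
    (hsain : ∀ j t, IsSelfAdjoint (Hin j t))
    (hHinnorm : ∀ j t, ‖Hin j t‖ ≤ L)
    (dv : ℕ → ℕ → EuclideanSpace ℝ (Fin d)) (hdv : ∀ j τ, ‖dv j τ‖ ≤ δ)
    (D : ℕ → EuclideanSpace ℝ (Fin d))
    (hD : ∀ j, D j = ∑ τ ∈ Finset.range K,
      (((List.range (K - 1 - τ)).map fun k =>
        (1 : EuclideanSpace ℝ (Fin d) →L[ℝ] EuclideanSpace ℝ (Fin d))
          - (a j * η) • Hin j (K - 1 - k)).prod)
        ((η * a j) • dv j τ))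
    (hQHnorm : ∀ j', ‖(1 : EuclideanSpace ℝ (Fin d) →L[ℝ] EuclideanSpace ℝ (Fin d))
        - Q j' * H j'‖ ≤ 1 + η * a j' * K * (1 + η * N * L) ^ K * L)
    (hstep1 : η * N * L ≤ 1 / K)
    (hstep2 : η * N * K * (1 + η * N * L) ^ K * L ≤ 1 / N)
    (A : ℕ → (EuclideanSpace ℝ (Fin d) →L[ℝ] EuclideanSpace ℝ (Fin d)))
    (hA : ∀ j, A j = ((List.range (N - j)).map fun k =>
      (1 : EuclideanSpace ℝ (Fin d) →L[ℝ] EuclideanSpace ℝ (Fin d))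
        - Q (N - k) * H (N - k)).prod) :
    ‖∑ j ∈ Finset.Icc 1 N, (A j) (D j)‖ ≤ η * N * K * Real.exp 1 ^ 2 * δ := by
  have hNpos : (0:ℝ) < N := by exact_mod_cast lt_of_lt_of_le (by norm_num) hN
  have hηNL : 0 ≤ η * N * L := by positivity
  set c : ℝ := (1 + η * N * L) ^ K with hc
  have hc1 : 1 ≤ c := one_le_pow₀ (by linarith)
  have hc0 : 0 ≤ c := by linarith
  -- c ≤ e
  have hce : c ≤ Real.exp 1 := by
    have h1 : (1 + η * N * L) ^ K ≤ (Real.exp (η * N * L)) ^ K :=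
      pow_le_pow_left₀ (by linarith) (by linarith [Real.add_one_le_exp (η * N * L)]) K
    have h2 : (Real.exp (η * N * L)) ^ K = Real.exp (K * (η * N * L)) :=
      (Real.exp_nat_mul _ K).symm
    have h3 : (K:ℝ) * (η * N * L) ≤ 1 := by
      have hKpos : (0:ℝ) < K := by exact_mod_cast hK
      calc (K:ℝ) * (η * N * L) ≤ (K:ℝ) * (1/K) := by
            exact mul_le_mul_of_nonneg_left hstep1 (le_of_lt hKpos)
        _ = 1 := by field_simp
    calc c ≤ Real.exp (K * (η * N * L)) := by rw [← h2]; exact h1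
      _ ≤ Real.exp 1 := Real.exp_le_exp.mpr h3
  -- weights and a bounds
  have hwle : ∀ j ∈ Finset.Icc 1 N, w j ≤ 1 := by
    intro j hj
    calc w j ≤ ∑ i ∈ Finset.Icc 1 N, w i :=
          Finset.single_le_sum (fun i _ => hw0 i) hj
      _ = 1 := hw1
  have ha0 : ∀ j, 0 ≤ a j := fun j => by
    rw [ha]; exact mul_nonneg (Nat.cast_nonneg N) (hw0 j)
  have haN : ∀ j ∈ Finset.Icc 1 N, a j ≤ N := by
    intro j hj; rw [ha]
    calc (N:ℝ) * w j ≤ N * 1 := mul_le_mul_of_nonneg_left (hwle j hj) (le_of_lt hNpos)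
      _ = N := mul_one _
  -- bound on D j
  have hDbound : ∀ j ∈ Finset.Icc 1 N, ‖D j‖ ≤ (K:ℝ) * (c * (η * a j * δ)) := by
    intro j hj
    rw [hD]
    calc ‖∑ τ ∈ Finset.range K, (((List.range (K - 1 - τ)).map fun k =>
          (1 : EuclideanSpace ℝ (Fin d) →L[ℝ] EuclideanSpace ℝ (Fin d))
            - (a j * η) • Hin j (K - 1 - k)).prod) ((η * a j) • dv j τ)‖
        ≤ ∑ τ ∈ Finset.range K, ‖(((List.range (K - 1 - τ)).map fun k =>
          (1 : EuclideanSpace ℝ (Fin d) →L[ℝ] EuclideanSpace ℝ (Fin d))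
            - (a j * η) • Hin j (K - 1 - k)).prod) ((η * a j) • dv j τ)‖ :=
          norm_sum_le _ _
      _ ≤ ∑ τ ∈ Finset.range K, c * (η * a j * δ) := by
          apply Finset.sum_le_sum
          intro τ hτ
          have hprod : ‖((List.range (K - 1 - τ)).map fun k =>
              (1 : EuclideanSpace ℝ (Fin d) →L[ℝ] EuclideanSpace ℝ (Fin d))
                - (a j * η) • Hin j (K - 1 - k)).prod‖ ≤ c := by
            have hlen : ((List.range (K - 1 - τ)).map fun k =>
                (1 : EuclideanSpace ℝ (Fin d) →L[ℝ] EuclideanSpace ℝ (Fin d))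
                  - (a j * η) • Hin j (K - 1 - k)).length = K - 1 - τ := by simp
            have := list_prod_norm_le (1 + η * N * L) (by linarith)
              ((List.range (K - 1 - τ)).map fun k =>
                (1 : EuclideanSpace ℝ (Fin d) →L[ℝ] EuclideanSpace ℝ (Fin d))
                  - (a j * η) • Hin j (K - 1 - k)) ?_
            · refine this.trans ?_
              rw [hlen]
              exact pow_le_pow_right₀ (by linarith) (by omega)
            · intro x hx
              simp only [List.mem_map, List.mem_range] at hx
              obtain ⟨k, hk, rfl⟩ := hx
              calc ‖(1 : EuclideanSpace ℝ (Fin d) →L[ℝ] EuclideanSpace ℝ (Fin d))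
                    - (a j * η) • Hin j (K - 1 - k)‖
                  ≤ ‖(1 : EuclideanSpace ℝ (Fin d) →L[ℝ] EuclideanSpace ℝ (Fin d))‖
                    + ‖(a j * η) • Hin j (K - 1 - k)‖ := norm_sub_le _ _
                _ ≤ 1 + η * N * L := by
                    have h1 : ‖(1 : EuclideanSpace ℝ (Fin d) →L[ℝ] EuclideanSpace ℝ (Fin d))‖ ≤ 1 := by
                      rw [ContinuousLinearMap.one_def]; exact ContinuousLinearMap.norm_id_le
                    have h2 : ‖(a j * η) • Hin j (K - 1 - k)‖ ≤ η * N * L := by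
                      refine (norm_smul_le (a j * η) (Hin j (K - 1 - k))).trans ?_
                      rw [Real.norm_eq_abs, abs_of_nonneg (mul_nonneg (ha0 j) hη.le)]
                      calc a j * η * ‖Hin j (K - 1 - k)‖ ≤ (N * η) * L := by
                            apply mul_le_mul (mul_le_mul_of_nonneg_right (haN j hj) hη.le)
                              (hHinnorm _ _) (norm_nonneg _) (by positivity)
                        _ = η * N * L := by ring
                    linarith
            done
          have hvec : ‖(η * a j) • dv j τ‖ ≤ η * a j * δ := by
            refine (norm_smul_le (η * a j) (dv j τ)).trans ?_
            rw [Real.norm_eq_abs, abs_of_nonneg (mul_nonneg hη.le (ha0 j))]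
            exact mul_le_mul_of_nonneg_left (hdv j τ) (mul_nonneg hη.le (ha0 j))
          calc ‖(((List.range (K - 1 - τ)).map fun k =>
                (1 : EuclideanSpace ℝ (Fin d) →L[ℝ] EuclideanSpace ℝ (Fin d))
                  - (a j * η) • Hin j (K - 1 - k)).prod) ((η * a j) • dv j τ)‖
              ≤ ‖((List.range (K - 1 - τ)).map fun k =>
                (1 : EuclideanSpace ℝ (Fin d) →L[ℝ] EuclideanSpace ℝ (Fin d))
                  - (a j * η) • Hin j (K - 1 - k)).prod‖ * ‖(η * a j) • dv j τ‖ :=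
                ContinuousLinearMap.le_opNorm _ _
            _ ≤ c * (η * a j * δ) :=
                mul_le_mul hprod hvec (norm_nonneg _) hc0
      _ = (K:ℝ) * (c * (η * a j * δ)) := by
          rw [Finset.sum_const, Finset.card_range, nsmul_eq_mul]
  -- bound on A j
  have hAbound : ∀ j ∈ Finset.Icc 1 N, ‖A j‖ ≤ Real.exp 1 := by
    intro j hj
    rw [hA]
    have := list_prod_norm_le (1 + 1/N) (by linarith [one_div_pos.mpr hNpos])
      ((List.range (N - j)).map fun k =>
        (1 : EuclideanSpace ℝ (Fin d) →L[ℝ] EuclideanSpace ℝ (Fin d))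
          - Q (N - k) * H (N - k)) ?_
    · refine this.trans ?_
      have hlen : ((List.range (N - j)).map fun k =>
          (1 : EuclideanSpace ℝ (Fin d) →L[ℝ] EuclideanSpace ℝ (Fin d))
            - Q (N - k) * H (N - k)).length = N - j := by simp
      rw [hlen]
      calc (1 + 1/(N:ℝ)) ^ (N - j) ≤ (1 + 1/(N:ℝ)) ^ N :=
            pow_le_pow_right₀ (by linarith [one_div_pos.mpr hNpos]) (by omega)
        _ ≤ (Real.exp (1/N)) ^ N :=
            pow_le_pow_left₀ (by positivity) (by linarith [Real.add_one_le_exp (1/(N:ℝ))]) N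
        _ = Real.exp (N * (1/N)) := (Real.exp_nat_mul _ N).symm
        _ = Real.exp 1 := by rw [mul_one_div, div_self (ne_of_gt hNpos)]
    · intro x hx
      simp only [List.mem_map, List.mem_range] at hx
      obtain ⟨k, hk, rfl⟩ := hx
      have hmem : N - k ∈ Finset.Icc 1 N := by
        simp only [Finset.mem_Icc]
        simp only [Finset.mem_Icc] at hj
        omega
      calc ‖(1 : EuclideanSpace ℝ (Fin d) →L[ℝ] EuclideanSpace ℝ (Fin d))
            - Q (N - k) * H (N - k)‖
          ≤ 1 + η * a (N - k) * K * (1 + η * N * L) ^ K * L := hQHnorm _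
        _ ≤ 1 + 1/N := by
            have hfac : (0:ℝ) ≤ η * K * c * L := by positivity
            have h1 : η * a (N - k) * K * c * L ≤ η * N * K * c * L := by
              calc η * a (N - k) * K * c * L = a (N - k) * (η * K * c * L) := by ring
                _ ≤ N * (η * K * c * L) :=
                    mul_le_mul_of_nonneg_right (haN _ hmem) hfac
                _ = η * N * K * c * L := by ring
            linarith [hstep2]
  -- assemble
  have hsum : ∑ j ∈ Finset.Icc 1 N, a j = N := by
    simp only [ha, ← Finset.mul_sum, hw1, mul_one]
  calc ‖∑ j ∈ Finset.Icc 1 N, (A j) (D j)‖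
      ≤ ∑ j ∈ Finset.Icc 1 N, ‖(A j) (D j)‖ := norm_sum_le _ _
    _ ≤ ∑ j ∈ Finset.Icc 1 N, Real.exp 1 * ((K:ℝ) * (c * (η * a j * δ))) := by
        apply Finset.sum_le_sum
        intro j hj
        calc ‖(A j) (D j)‖ ≤ ‖A j‖ * ‖D j‖ := ContinuousLinearMap.le_opNorm _ _
          _ ≤ Real.exp 1 * ((K:ℝ) * (c * (η * a j * δ))) := by
              apply mul_le_mul (hAbound j hj) (hDbound j hj) (norm_nonneg _)
                (le_of_lt (Real.exp_pos 1))
    _ = Real.exp 1 * (K:ℝ) * c * η * δ * ∑ j ∈ Finset.Icc 1 N, a j := by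
        rw [Finset.mul_sum]; apply Finset.sum_congr rfl; intros; ring
    _ = Real.exp 1 * (K:ℝ) * c * η * δ * N := by rw [hsum]
    _ ≤ η * N * K * Real.exp 1 ^ 2 * δ := by
        have h0 : (0:ℝ) ≤ η * N * K * δ * Real.exp 1 := by positivity
        calc Real.exp 1 * (K:ℝ) * c * η * δ * N
            = (η * N * K * δ * Real.exp 1) * c := by ring
          _ ≤ (η * N * K * δ * Real.exp 1) * Real.exp 1 :=
              mul_le_mul_of_nonneg_left hce h0
          _ = η * N * K * Real.exp 1 ^ 2 * δ := by ring
end
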